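/- arXiv:2410.04432 — 3 statements merged into one kernel-verified Lean document; each statement's English description precedes it below -/
import Mathlib

section
/- For nonnegative integers k ≤ i and q > 0, the alternating sum ∑_{l=0}^{k} (-1)^l q^{binom(l+1,2)} qbinom(k, l) qbinom(i - l, k) equals 1, where binom(l+1,2) = l(l+1)/2 is the ordinary binomial coefficient. -/
open Finset Matrix

noncomputable def qInt (q : ℝ) (m : ℕ) : ℝ := ∑ i ∈ Finset.range m, q ^ i

noncomputable def qFact (q : ℝ) (m : ℕ) : ℝ := ∏ i ∈ Finset.range m, qInt q (i + 1)

noncomputable def qBinom (q : ℝ) (m k : ℕ) : ℝ :=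
  if k ≤ m then qFact q m / (qFact q k * qFact q (m - k)) else 0

/-!
Let `S k i` be the alternating sum. The q-Pascal rule
`qbinom(n+1, k+1) = qbinom(n, k+1) + q^(n-k) qbinom(n, k)`, applied to `qbinom(i+1-l, k+1)`,
gives `S (k+1) (i+1) = S (k+1) i + q^(i-k) T` with
`T = ∑ₗ (-1)^l q^binom(l,2) qbinom(k+1, l) qbinom(i-l, k)`. The mirrored rule
`qbinom(k+1, l+1) = q^(l+1) qbinom(k, l+1) + qbinom(k, l)` splits `T` into `S k i` and, after the
shift `l ↦ l + 1`, `-S k (i-1)`. So `S (k+1) i` does not change with `i` once `S k` is constant,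
and a double induction from `S 0 i = S k k = 1` finishes.
-/

variable {q : ℝ}

lemma qInt_pos (hq : 0 < q) {m : ℕ} (hm : 0 < m) : 0 < qInt q m :=
  sum_pos (fun i _ => pow_pos hq i) (nonempty_range_iff.mpr hm.ne')

lemma qInt_add (q : ℝ) (a b : ℕ) : qInt q (a + b) = qInt q a + q ^ a * qInt q b := by
  simp only [qInt, sum_range_add, mul_sum, pow_add]

lemma qFact_pos (hq : 0 < q) (m : ℕ) : 0 < qFact q m :=
  prod_pos fun i _ => qInt_pos hq i.succ_pos

@[simp]
lemma qFact_zero (q : ℝ) : qFact q 0 = 1 := prod_range_zero _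

lemma qFact_succ (q : ℝ) (m : ℕ) : qFact q (m + 1) = qFact q m * qInt q (m + 1) :=
  prod_range_succ _ _

lemma qBinom_of_lt {m k : ℕ} (h : m < k) : qBinom q m k = 0 := by
  simp [qBinom, h.not_ge]

@[simp]
lemma qBinom_zero_right (hq : 0 < q) (m : ℕ) : qBinom q m 0 = 1 := by
  simp [qBinom, (qFact_pos hq m).ne']

@[simp]
lemma qBinom_self (hq : 0 < q) (m : ℕ) : qBinom q m m = 1 := by
  simp [qBinom, (qFact_pos hq m).ne']

lemma qBinom_succ_succ (hq : 0 < q) (n k : ℕ) :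
    qBinom q (n + 1) (k + 1) = qBinom q n (k + 1) + q ^ (n - k) * qBinom q n k := by
  rcases lt_or_ge n k with h | h
  · simp [qBinom_of_lt h, qBinom_of_lt (Nat.succ_lt_succ h),
      qBinom_of_lt (h.trans k.lt_succ_self)]
  obtain ⟨b, rfl⟩ := Nat.exists_eq_add_of_le h
  rcases b with _ | b
  · simp [qBinom_of_lt (k.lt_succ_self), hq]
  have hI : qInt q (k + (b + 1) + 1) = qInt q (b + 1) + q ^ (b + 1) * qInt q (k + 1) := by
    rw [← qInt_add]; ring_nf
  have hpos := fun m => (qFact_pos hq m).ne'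
  have hk := (qInt_pos hq k.succ_pos).ne'
  have hb := (qInt_pos hq b.succ_pos).ne'
  simp only [qBinom, if_pos (show k + 1 ≤ k + (b + 1) + 1 by omega),
    if_pos (show k + 1 ≤ k + (b + 1) by omega), if_pos (show k ≤ k + (b + 1) by omega),
    show k + (b + 1) + 1 - (k + 1) = b + 1 by omega, show k + (b + 1) - (k + 1) = b by omega,
    Nat.add_sub_cancel_left, qFact_succ q (k + (b + 1)), hI, qFact_succ q k, qFact_succ q b]
  field_simp

lemma qBinom_succ_succ' (hq : 0 < q) (k l : ℕ) :
    qBinom q (k + 1) (l + 1) = q ^ (l + 1) * qBinom q k (l + 1) + qBinom q k l := by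
  rcases lt_or_ge k l with h | h
  · simp [qBinom_of_lt h, qBinom_of_lt (Nat.succ_lt_succ h),
      qBinom_of_lt (h.trans l.lt_succ_self)]
  obtain ⟨b, rfl⟩ := Nat.exists_eq_add_of_le h
  rcases b with _ | b
  · simp [qBinom_of_lt (l.lt_succ_self), hq]
  have hI : qInt q (l + (b + 1) + 1) = qInt q (l + 1) + q ^ (l + 1) * qInt q (b + 1) := by
    rw [← qInt_add]; ring_nf
  have hpos := fun m => (qFact_pos hq m).ne'
  have hl := (qInt_pos hq l.succ_pos).ne'
  have hb := (qInt_pos hq b.succ_pos).ne'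
  simp only [qBinom, if_pos (show l + 1 ≤ l + (b + 1) + 1 by omega),
    if_pos (show l + 1 ≤ l + (b + 1) by omega), if_pos (show l ≤ l + (b + 1) by omega),
    show l + (b + 1) + 1 - (l + 1) = b + 1 by omega, show l + (b + 1) - (l + 1) = b by omega,
    Nat.add_sub_cancel_left, qFact_succ q (l + (b + 1)), hI, qFact_succ q l, qFact_succ q b]
  field_simp
  ring

lemma pow_choose_two_succ (q : ℝ) (n : ℕ) : q ^ (n + 1).choose 2 = q ^ n * q ^ n.choose 2 := by
  rw [Nat.choose_succ_succ', Nat.choose_one_right, pow_add]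

noncomputable def qAltSum (q : ℝ) (k i : ℕ) : ℝ :=
  ∑ l ∈ range (k + 1), (-1 : ℝ) ^ l * q ^ (l + 1).choose 2 * qBinom q k l * qBinom q (i - l) k

lemma qAltSum_eq_sum_range {k n : ℕ} (hn : k < n) (i : ℕ) :
    qAltSum q k i = ∑ l ∈ range n,
      (-1 : ℝ) ^ l * q ^ (l + 1).choose 2 * qBinom q k l * qBinom q (i - l) k := by
  refine sum_subset (range_subset_range.mpr hn) fun l _ hl => ?_
  rw [qBinom_of_lt (by simpa using hl), mul_zero, zero_mul]

lemma qAltSum_zero_left (hq : 0 < q) (i : ℕ) : qAltSum q 0 i = 1 := by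
  simp [qAltSum, hq]

lemma qAltSum_self (hq : 0 < q) (k : ℕ) : qAltSum q k k = 1 := by
  rw [qAltSum, sum_range_succ', sum_eq_zero fun l hl => by
    rw [qBinom_of_lt (show k - (l + 1) < k by simp at hl; omega), mul_zero]]
  simp [hq]

lemma qAltSum_succ_succ (hq : 0 < q) {k i : ℕ} (hki : k < i) :
    qAltSum q (k + 1) (i + 1) = qAltSum q (k + 1) i + q ^ (i - k) * ∑ l ∈ range (k + 2),
      (-1 : ℝ) ^ l * q ^ l.choose 2 * qBinom q (k + 1) l * qBinom q (i - l) k := by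
  rw [qAltSum, qAltSum, mul_sum, ← sum_add_distrib]
  refine sum_congr rfl fun l hl => ?_
  have hli : l ≤ i := by rw [mem_range] at hl; omega
  rw [Nat.sub_add_comm hli, qBinom_succ_succ hq]
  rcases lt_or_ge (i - l) k with h | h
  · simp [qBinom_of_lt h]
  have hexp : q ^ (l + 1).choose 2 * q ^ (i - l - k) = q ^ (i - k) * q ^ l.choose 2 := by
    rw [pow_choose_two_succ, mul_right_comm, ← pow_add, show l + (i - l - k) = i - k by omega]
  linear_combination ((-1 : ℝ) ^ l * qBinom q (k + 1) l * qBinom q (i - l) k) * hexp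

lemma sum_qBinom_succ_eq_qAltSum_sub (hq : 0 < q) (k i : ℕ) :
    ∑ l ∈ range (k + 2),
        (-1 : ℝ) ^ l * q ^ l.choose 2 * qBinom q (k + 1) l * qBinom q (i + 1 - l) k =
      qAltSum q k (i + 1) - qAltSum q k i := by
  rw [qAltSum_eq_sum_range (k.lt_succ_self.trans (k + 1).lt_succ_self), qAltSum, sum_range_succ',
    sum_range_succ' _ (k + 1), ← sub_add_eq_add_sub, ← sum_sub_distrib]
  congr 1
  · refine sum_congr rfl fun l _ => ?_
    rw [qBinom_succ_succ' hq, pow_choose_two_succ q (l + 1), Nat.add_sub_add_right]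
    ring
  · simp [hq]

theorem qAlternatingSum_eq_one (q : ℝ) (hq : 0 < q) (k i : ℕ) (hki : k ≤ i) :
    ∑ l ∈ Finset.range (k + 1),
      (-1 : ℝ) ^ l * q ^ ((l + 1).choose 2) * qBinom q k l * qBinom q (i - l) k = 1 := by
  change qAltSum q k i = 1
  induction k generalizing i with
  | zero => exact qAltSum_zero_left hq i
  | succ k ih =>
    induction i, hki using Nat.le_induction with
    | base => exact qAltSum_self hq (k + 1)
    | succ i hki ihi =>
      obtain ⟨j, rfl⟩ : ∃ j, i = j + 1 := ⟨i - 1, by omega⟩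
      rw [qAltSum_succ_succ hq hki, sum_qBinom_succ_eq_qAltSum_sub hq, ihi, ih _ (by omega),
        ih _ (by omega)]
      ring
end

section
/- For a decreasing sequence of negative nodes 0 > t_1 > ⋯ > t_{n+1}, the Neville elimination data of V_J := V J satisfies: multipliers m_{i,j} = ∏_{k=1}^{j-1} (t_i - t_{i-k})/(t_{i-1} - t_{i-k-1}) > 0, diagonal pivots p_{i,i} = (-1)^{i-1} ∏_{k=1}^{i-1} (t_i - t_k) > 0, and multipliers of the transpose m̃_{j,i} = -t_i > 0. -/
/-!
Negating the nodes turns `V * J` into `vandermonde s` with increasing positive nodes `s = -t`.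
After `m` steps of Neville elimination the entry `(i, j)` of `vandermonde s` is
`∏_{l < m} (s i - s (i - 1 - l))` times the complete homogeneous polynomial
`h_{j - m}(s (i - m), …, s i)` (a divided difference of `x ^ j`), and one more step keeps this
form because of the identity
`h_{d+1}(x_1, …, x_{k+1}) - h_{d+1}(x_0, …, x_k) = (x_{k+1} - x_0) h_d(x_0, …, x_{k+1})`.
For the transpose the entry is `s j ^ (i - m) * ∏_{l < m} (s j - s l)`. Multipliers and pivots
are quotients and values of these closed forms in the pivot column.
-/

open Finset Matrix

def IsTotallyPos {n : ℕ} (A : Matrix (Fin n) (Fin n) ℝ) : Prop :=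
  ∀ (k : ℕ) (f g : Fin k → Fin n), StrictMono f → StrictMono g →
    0 ≤ (A.submatrix f g).det

def IsStrictTotallyPos {n : ℕ} (A : Matrix (Fin n) (Fin n) ℝ) : Prop :=
  ∀ (k : ℕ) (f g : Fin k → Fin n), StrictMono f → StrictMono g →
    0 < (A.submatrix f g).det

noncomputable def Jmat (n : ℕ) : Matrix (Fin (n + 1)) (Fin (n + 1)) ℝ :=
  Matrix.diagonal fun i => (-1 : ℝ) ^ (i : ℕ)

noncomputable def nevilleStep (n k : ℕ) (B : Matrix (Fin (n + 1)) (Fin (n + 1)) ℝ) :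
    Matrix (Fin (n + 1)) (Fin (n + 1)) ℝ :=
  Matrix.of fun i j =>
    let r : Fin (n + 1) := ⟨i.1 - 1, Nat.lt_of_le_of_lt (Nat.sub_le _ _) i.2⟩
    let c : Fin (n + 1) := ⟨min (k - 1) n, Nat.lt_succ_of_le (min_le_right _ _)⟩
    if 1 ≤ k ∧ k ≤ i.1 ∧ k ≤ j.1 ∧ B r c ≠ 0 then
      B i j - (B i c / B r c) * B r j
    else B i j

/-- `nevilleIter n A k` is the matrix `A^{(k)}` of the Neville elimination of `A`
(with `A^{(1)} = A`, and `A^{(0)} = A` by convention). -/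
noncomputable def nevilleIter (n : ℕ) (A : Matrix (Fin (n + 1)) (Fin (n + 1)) ℝ) :
    ℕ → Matrix (Fin (n + 1)) (Fin (n + 1)) ℝ
  | 0 => A
  | k + 1 => nevilleStep n k (nevilleIter n A k)

theorem neg_one_pow_mul_prod_range_sub {R : Type*} [CommRing R] (f : ℕ → R) (a : R) (m : ℕ) :
    (-1) ^ m * ∏ k ∈ range m, (f k - a) = ∏ k ∈ range m, (a - f k) := by
  simp_rw [← neg_sub a, prod_neg, card_range, ← mul_assoc, ← mul_pow, neg_one_mul, neg_neg,
    one_pow, one_mul]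

section hsymmWindow

variable {R : Type*} [CommRing R] (s : ℕ → R)

/-- `hsymmWindow s d a c` is the complete homogeneous symmetric polynomial of degree `d`
evaluated at `s a, s (a + 1), …, s (a + c)`. -/
def hsymmWindow : ℕ → ℕ → ℕ → R
  | 0, _, _ => 1
  | d + 1, a, 0 => s a * hsymmWindow d a 0
  | d + 1, a, c + 1 => hsymmWindow (d + 1) a c + s (a + c + 1) * hsymmWindow d a (c + 1)
termination_by d _ c => (d, c)

@[simp]
theorem hsymmWindow_zero (a c : ℕ) : hsymmWindow s 0 a c = 1 := by
  rw [hsymmWindow]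

theorem hsymmWindow_succ_succ (d a c : ℕ) :
    hsymmWindow s (d + 1) a (c + 1) =
      hsymmWindow s (d + 1) a c + s (a + c + 1) * hsymmWindow s d a (c + 1) := by
  rw [hsymmWindow]

theorem hsymmWindow_singleton (d a : ℕ) : hsymmWindow s d a 0 = s a ^ d := by
  induction d with
  | zero => simp
  | succ d ih => rw [hsymmWindow, ih, pow_succ']

theorem hsymmWindow_shift_sub (d c a : ℕ) :
    hsymmWindow s (d + 1) (a + 1) c - hsymmWindow s (d + 1) a c =
      (s (a + c + 1) - s a) * hsymmWindow s d a (c + 1) := by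
  induction d generalizing c with
  | zero =>
    induction c with
    | zero => simp [hsymmWindow_singleton]
    | succ c ih =>
      rw [hsymmWindow_succ_succ s 0 (a + 1), hsymmWindow_succ_succ s 0 a,
        show a + 1 + c + 1 = a + (c + 1) + 1 by omega]
      simp only [hsymmWindow_zero] at ih ⊢
      linear_combination ih
  | succ d ihd =>
    induction c with
    | zero =>
      have h := ihd 0
      simp only [hsymmWindow_singleton, add_zero] at h ⊢
      rw [hsymmWindow_succ_succ s d a 0, hsymmWindow_singleton, add_zero]
      linear_combination s (a + 1) * h
    | succ c ihc =>
      rw [hsymmWindow_succ_succ s (d + 1) (a + 1), hsymmWindow_succ_succ s (d + 1) a,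
        hsymmWindow_succ_succ s d a (c + 1), show a + 1 + c + 1 = a + (c + 1) + 1 by omega]
      linear_combination ihc + s (a + (c + 1) + 1) * ihd (c + 1)

end hsymmWindow

/-- Entry `(i, j)` is last changed by step `min i j + 1`, after which its column is the pivot
column or lies left of it. -/
theorem nevilleIter_eq_of_stage {n : ℕ} (A : Matrix (Fin (n + 1)) (Fin (n + 1)) ℝ)
    (G : ℕ → ℕ → ℕ → ℝ) (hA : ∀ i j : Fin (n + 1), A i j = G 0 i j)
    (hpivot : ∀ m i, m ≤ i → i < n → G m i m ≠ 0)
    (hstep : ∀ m i j, m ≤ i → m < j → i < n → j ≤ n →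
      G (m + 1) (i + 1) j * G m i m = G m (i + 1) j * G m i m - G m (i + 1) m * G m i j)
    (K : ℕ) (i j : Fin (n + 1)) :
    nevilleIter n A K i j = G (min (K - 1) (min i j)) i j := by
  induction K generalizing i j with
  | zero => simpa [nevilleIter] using hA i j
  | succ K ih =>
    simp only [nevilleIter, nevilleStep, Matrix.of_apply, ih]
    by_cases hK : 1 ≤ K ∧ K ≤ i ∧ K ≤ j
    · obtain ⟨m, rfl⟩ : ∃ m, K = m + 1 := ⟨K - 1, by omega⟩
      obtain ⟨r, hr⟩ : ∃ r, (i : ℕ) = r + 1 := ⟨i - 1, by omega⟩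
      have hmr : m ≤ r := by omega
      have hmj : m < j := by omega
      have hrn : r < n := by omega
      have hp := hpivot m r hmr hrn
      rw [hr, Nat.add_sub_cancel, Nat.add_sub_cancel, show min m n = m by omega,
        show min m (min r m) = m by omega, show min m (min (r + 1) m) = m by omega,
        show min m (min r j) = m by omega, show min m (min (r + 1) j) = m by omega,
        show min (m + 1 + 1 - 1) (min (r + 1) j) = m + 1 by omega,
        if_pos ⟨by omega, by omega, hK.2.2, hp⟩]
      field_simp
      linear_combination -hstep m r j hmr hmj hrn (by omega)
    · rw [if_neg fun h => hK ⟨h.1, h.2.1, h.2.2.1⟩,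
        show min (K + 1 - 1) (min i j) = min (K - 1) (min i j) by omega]

section Stage

variable {R : Type*} [CommRing R] (s : ℕ → R)

def vandermondeStage (m i j : ℕ) : R :=
  (∏ l ∈ range m, (s i - s (i - 1 - l))) * hsymmWindow s (j - m) (i - m) m

def vandermondeTransposeStage (m i j : ℕ) : R :=
  s j ^ (i - m) * ∏ l ∈ range m, (s j - s l)

theorem vandermondeStage_succ {m i j : ℕ} (hmi : m ≤ i) (hmj : m < j) :
    vandermondeStage s (m + 1) (i + 1) j * vandermondeStage s m i m =
      vandermondeStage s m (i + 1) j * vandermondeStage s m i m -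
        vandermondeStage s m (i + 1) m * vandermondeStage s m i j := by
  obtain ⟨a, rfl⟩ : ∃ a, i = a + m := ⟨i - m, by omega⟩
  obtain ⟨d, rfl⟩ : ∃ d, j = m + d + 1 := ⟨j - m - 1, by omega⟩
  have hdiff := hsymmWindow_shift_sub s d m a
  simp only [vandermondeStage, prod_range_succ, Nat.sub_self, hsymmWindow_zero, Nat.add_sub_cancel,
    show m + d + 1 - (m + 1) = d by omega, show a + m + 1 - (m + 1) = a by omega,
    show m + d + 1 - m = d + 1 by omega, show a + m + 1 - m = a + 1 by omega]
  linear_combination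
    (-(∏ l ∈ range m, (s (a + m + 1) - s (a + m - l))) *
      ∏ l ∈ range m, (s (a + m) - s (a + m - 1 - l))) * hdiff

theorem vandermondeTransposeStage_succ {m i j : ℕ} (hmi : m ≤ i) :
    vandermondeTransposeStage s (m + 1) (i + 1) j * vandermondeTransposeStage s m i m =
      vandermondeTransposeStage s m (i + 1) j * vandermondeTransposeStage s m i m -
        vandermondeTransposeStage s m (i + 1) m * vandermondeTransposeStage s m i j := by
  simp only [vandermondeTransposeStage, prod_range_succ, Nat.add_sub_add_right,
    show i + 1 - m = i - m + 1 by omega, pow_succ]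
  ring

end Stage

theorem vandermonde_neg_mul_Jmat {n : ℕ} (v : Fin (n + 1) → ℝ) :
    vandermonde (-v) * Jmat n = vandermonde v := by
  ext i j
  rw [Jmat, mul_diagonal, vandermonde_apply, vandermonde_apply, Pi.neg_apply, neg_pow,
    mul_right_comm, ← mul_pow, neg_one_mul, neg_neg, one_pow, one_mul]

section Vandermonde

variable {n : ℕ} {s : ℕ → ℝ}

theorem nevilleIter_vandermonde (hs : Set.InjOn s (Set.Iic n)) (K : ℕ) (i j : Fin (n + 1)) :
    nevilleIter n (vandermonde fun i => s i) K i j =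
      vandermondeStage s (min (K - 1) (min i j)) i j := by
  refine nevilleIter_eq_of_stage _ _ (fun i j => ?_) (fun m i hmi hin => ?_)
    (fun m i j hmi hmj _ _ => vandermondeStage_succ s hmi hmj) K i j
  · simp [vandermondeStage, hsymmWindow_singleton]
  · simp only [vandermondeStage, Nat.sub_self, hsymmWindow_zero, mul_one]
    refine prod_ne_zero_iff.2 fun l hl => sub_ne_zero.2 fun h => ?_
    rw [mem_range] at hl
    have := hs (Set.mem_Iic.2 (by omega)) (Set.mem_Iic.2 (by omega)) h
    omega

theorem nevilleIter_vandermonde_pivotColumn (hs : Set.InjOn s (Set.Iic n)) {K r c : ℕ}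
    (hK : c + 1 = K) (hcr : c ≤ r) (hr : r ≤ n) :
    nevilleIter n (vandermonde fun i => s i) K ⟨r, by omega⟩ ⟨c, by omega⟩ =
      ∏ l ∈ range c, (s r - s (r - 1 - l)) := by
  rw [nevilleIter_vandermonde hs, vandermondeStage, show min (K - 1) (min r c) = c by omega,
    Nat.sub_self, hsymmWindow_zero, mul_one]

theorem vandermondeTransposeStage_self_ne_zero (hs : Set.InjOn s (Set.Iic n))
    (hs0 : ∀ x ≤ n, s x ≠ 0) {m i : ℕ} (hmi : m ≤ i) (hi : i ≤ n) :
    vandermondeTransposeStage s m i m ≠ 0 := by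
  refine mul_ne_zero (pow_ne_zero _ (hs0 m (by omega)))
    (prod_ne_zero_iff.2 fun l hl => sub_ne_zero.2 fun h => ?_)
  rw [mem_range] at hl
  have := hs (Set.mem_Iic.2 (by omega)) (Set.mem_Iic.2 (by omega)) h
  omega

theorem nevilleIter_vandermonde_transpose (hs : Set.InjOn s (Set.Iic n))
    (hs0 : ∀ x ≤ n, s x ≠ 0) (K : ℕ) (i j : Fin (n + 1)) :
    nevilleIter n (vandermonde fun i => s i)ᵀ K i j =
      vandermondeTransposeStage s (min (K - 1) (min i j)) i j := by
  refine nevilleIter_eq_of_stage _ _ (fun i j => ?_) (fun m i hmi hin => ?_)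
    (fun m i j hmi _ _ _ => vandermondeTransposeStage_succ s hmi) K i j
  · simp [vandermondeTransposeStage]
  · exact vandermondeTransposeStage_self_ne_zero hs hs0 hmi hin.le

theorem nevilleIter_vandermonde_diag (hs : Set.InjOn s (Set.Iic n)) {K c : ℕ}
    (hK : c + 1 = K) (hc : c ≤ n) :
    nevilleIter n (vandermonde fun i => s i) K ⟨c, by omega⟩ ⟨c, by omega⟩ =
      ∏ l ∈ range c, (s c - s l) :=
  (nevilleIter_vandermonde_pivotColumn hs hK le_rfl hc).trans
    (prod_range_reflect (fun l => s c - s l) c)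

theorem nevilleIter_vandermonde_transpose_div (hs : Set.InjOn s (Set.Iic n))
    (hs0 : ∀ x ≤ n, s x ≠ 0) {K r r' c : ℕ} (hK : c + 1 = K) (hr : r' + 1 = r) (hcr : c ≤ r')
    (hrn : r ≤ n) :
    nevilleIter n (vandermonde fun i => s i)ᵀ K ⟨r, by omega⟩ ⟨c, by omega⟩ /
      nevilleIter n (vandermonde fun i => s i)ᵀ K ⟨r', by omega⟩ ⟨c, by omega⟩ = s c := by
  subst hK hr
  rw [nevilleIter_vandermonde_transpose hs hs0, nevilleIter_vandermonde_transpose hs hs0,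
    show min (c + 1 - 1) (min (r' + 1) c) = c by omega,
    show min (c + 1 - 1) (min r' c) = c by omega,
    div_eq_iff (vandermondeTransposeStage_self_ne_zero hs hs0 hcr (by omega))]
  simp only [vandermondeTransposeStage, show r' + 1 - c = r' - c + 1 by omega, pow_succ]
  ring

end Vandermonde

theorem vandermondeJ_neville_data (n : ℕ) (t : Fin (n + 1) → ℝ)
    (ht0 : t 0 < 0) (htd : StrictAnti t) :
    -- multipliers of the Neville elimination of V_J = V·J
    (∀ i j : ℕ, ∀ hj : 1 ≤ j, ∀ hji : j < i, ∀ hin : i ≤ n + 1,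
      nevilleIter n ((Matrix.of fun i j : Fin (n + 1) => t i ^ (j : ℕ)) * Jmat n) j
          ⟨i - 1, by omega⟩ ⟨j - 1, by omega⟩ /
        nevilleIter n ((Matrix.of fun i j : Fin (n + 1) => t i ^ (j : ℕ)) * Jmat n) j
          ⟨i - 2, by omega⟩ ⟨j - 1, by omega⟩ =
        ∏ k : Fin (j - 1),
          (t ⟨i - 1, by omega⟩ - t ⟨i - 2 - (k : ℕ), by omega⟩) /
            (t ⟨i - 2, by omega⟩ - t ⟨i - 3 - (k : ℕ), by omega⟩) ∧
      0 < ∏ k : Fin (j - 1),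
          (t ⟨i - 1, by omega⟩ - t ⟨i - 2 - (k : ℕ), by omega⟩) /
            (t ⟨i - 2, by omega⟩ - t ⟨i - 3 - (k : ℕ), by omega⟩)) ∧
    -- diagonal pivots of the Neville elimination of V_J
    (∀ i : ℕ, ∀ hi : 1 ≤ i, ∀ hin : i ≤ n + 1,
      nevilleIter n ((Matrix.of fun i j : Fin (n + 1) => t i ^ (j : ℕ)) * Jmat n) i
          ⟨i - 1, by omega⟩ ⟨i - 1, by omega⟩ =
        (-1 : ℝ) ^ (i - 1) *
          ∏ k : Fin (i - 1),
            (t ⟨i - 1, by omega⟩ - t ⟨(k : ℕ), Nat.lt_of_lt_of_le k.2 (by omega)⟩) ∧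
      0 < (-1 : ℝ) ^ (i - 1) *
          ∏ k : Fin (i - 1),
            (t ⟨i - 1, by omega⟩ - t ⟨(k : ℕ), Nat.lt_of_lt_of_le k.2 (by omega)⟩)) ∧
    -- multipliers of the Neville elimination of the transpose of V_J
    (∀ i j : ℕ, ∀ hi : 1 ≤ i, ∀ hij : i < j, ∀ hjn : j ≤ n + 1,
      nevilleIter n ((Matrix.of fun i j : Fin (n + 1) => t i ^ (j : ℕ)) * Jmat n)ᵀ i
          ⟨j - 1, by omega⟩ ⟨i - 1, by omega⟩ /
        nevilleIter n ((Matrix.of fun i j : Fin (n + 1) => t i ^ (j : ℕ)) * Jmat n)ᵀ i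
          ⟨j - 2, by omega⟩ ⟨i - 1, by omega⟩ = -t ⟨i - 1, by omega⟩ ∧
      0 < -t ⟨i - 1, by omega⟩) := by
  obtain ⟨s, rfl⟩ : ∃ s : ℕ → ℝ, t = fun i : Fin (n + 1) => -s i :=
    ⟨fun x => if h : x < n + 1 then -t ⟨x, h⟩ else 0, funext fun i => by simp [i.is_le]⟩
  have hs : StrictMonoOn s (Set.Iic n) := fun a ha b hb hab => neg_lt_neg_iff.1
    (htd (show (⟨a, by simp at ha; omega⟩ : Fin (n + 1)) < ⟨b, by simp at hb; omega⟩ from hab))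
  have hlt : ∀ a b, a < b → b ≤ n → s a < s b := fun a b hab hb =>
    hs (Set.mem_Iic.2 (by omega)) (Set.mem_Iic.2 hb) hab
  have hpos : ∀ x ≤ n, 0 < s x := fun x hx =>
    (neg_neg_iff_pos.1 ht0).trans_le (hs.monotoneOn (by simp) (by simpa using hx) (Nat.zero_le x))
  have hV : (of fun i j : Fin (n + 1) => (-s i) ^ (j : ℕ)) * Jmat n = vandermonde fun i => s i :=
    vandermonde_neg_mul_Jmat _
  simp only [hV, neg_sub_neg, neg_neg]
  refine ⟨fun i j hj hji hin => ?_, fun i hi hin => ?_, fun i j hi hij hjn => ?_⟩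
  · rw [nevilleIter_vandermonde_pivotColumn hs.injOn, nevilleIter_vandermonde_pivotColumn hs.injOn,
      ← prod_div_distrib, prod_range]
    · refine ⟨prod_congr rfl fun k _ => ?_, prod_pos fun k _ => ?_⟩
      · rw [show i - 1 - 1 - k = i - 2 - k by omega, show i - 2 - 1 - k = i - 3 - k by omega,
          ← neg_sub (s (i - 1)), ← neg_sub (s (i - 2)), neg_div_neg_eq]
      · exact div_pos_of_neg_of_neg (sub_neg.2 (hlt _ _ (by omega) (by omega)))
          (sub_neg.2 (hlt _ _ (by omega) (by omega)))
    all_goals omega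
  · rw [nevilleIter_vandermonde_diag hs.injOn (by omega) (by omega),
      ← prod_range (fun k => s k - s (i - 1)), neg_one_pow_mul_prod_range_sub]
    exact ⟨rfl, prod_pos fun k hk => sub_pos.2 (hlt _ _ (by simp at hk; omega) (by omega))⟩
  · rw [nevilleIter_vandermonde_transpose_div hs.injOn fun x hx => (hpos x hx).ne']
    · exact ⟨rfl, hpos _ (by omega)⟩
    all_goals omega
end

section
/- The Wronskian matrix of the monomial basis (1, x, …, x^n) at a point x, W(x) := ((j-1)(j-2)⋯(j-i+1) x^{j-i})_{1 ≤ i,j ≤ n+1} (with entry 0 when i > j), is totally positive for every x ≥ 0, and J W(x) J is totally positive for every x ≤ 0, where J := diag((-1)^{i-1}). -/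
open Finset Matrix

/-!
W(x) = diag(i!) · P(x) with P(x)ᵢₖ = C(k,i) x^(k-i), and J W(x) J = W(-x), so everything reduces to
total positivity of P(x) for x ≥ 0. That follows from Neville elimination: P(x) is reached from the
identity by row operations "add x · row (a+1) to row a", and such an operation with a nonnegative
coefficient preserves total positivity, because by linearity of the determinant in that row an
affected minor becomes the old minor plus x times the minor with row a replaced by row a+1, which
is either a minor again or has two equal rows.
-/

open Polynomial

lemma StrictMono.update_of_covBy {ι α : Type*} [Preorder ι] [LinearOrder α] [DecidableEq ι]
    {f : ι → α} (hf : StrictMono f) {i : ι} {b : α} (hb : f i ⋖ b) (hb' : b ∉ Set.range f) :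
    StrictMono (Function.update f i b) := by
  intro p q hpq
  rcases eq_or_ne p i with rfl | hp
  · rw [Function.update_self, Function.update_of_ne hpq.ne']
    exact (hb.ge_of_gt (hf hpq)).lt_of_ne fun h => hb' ⟨q, h.symm⟩
  rcases eq_or_ne q i with rfl | hq
  · rw [Function.update_self, Function.update_of_ne hp]
    exact (hf hpq).trans hb.lt
  · simpa [Function.update_of_ne hp, Function.update_of_ne hq] using hf hpq

lemma Matrix.submatrix_updateRow_of_injective {m n k l R : Type*} [DecidableEq m] [DecidableEq k]
    (M : Matrix m n R) {f : k → m} (hf : Function.Injective f) (g : l → n) {i : k} (v : n → R) :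
    (M.updateRow (f i) v).submatrix f g = (M.submatrix f g).updateRow i (v ∘ g) := by
  ext p q
  simp [updateRow_apply, hf.eq_iff]

lemma Matrix.submatrix_updateRow_of_notMem_range {m n k l R : Type*} [DecidableEq m]
    (M : Matrix m n R) {f : k → m} (g : l → n) {a : m} (ha : a ∉ Set.range f) (v : n → R) :
    (M.updateRow a v).submatrix f g = M.submatrix f g := by
  have hfa : ∀ p, f p ≠ a := fun p h => ha ⟨p, h⟩
  ext p q
  simp [updateRow_apply, hfa]

lemma IsTotallyPos.one (N : ℕ) : IsTotallyPos (1 : Matrix (Fin N) (Fin N) ℝ) := by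
  intro k f g hf hg
  by_cases hfg : Set.range f = Set.range g
  · rw [(hf.range_inj hg).1 hfg, submatrix_one _ hg.injective, det_one]
    exact zero_le_one
  · obtain ⟨i, hi⟩ | ⟨j, hj⟩ : (∃ i, f i ∉ Set.range g) ∨ (∃ j, g j ∉ Set.range f) := by
      by_contra! h
      exact hfg (Set.Subset.antisymm (Set.range_subset_iff.2 h.1) (Set.range_subset_iff.2 h.2))
    · have hne : ∀ j, f i ≠ g j := fun j h => hi ⟨j, h.symm⟩
      exact (det_eq_zero_of_row_eq_zero i fun j => by simp [one_apply, hne]).ge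
    · have hne : ∀ i, f i ≠ g j := fun i h => hj ⟨i, h⟩
      exact (det_eq_zero_of_column_eq_zero j fun i => by simp [one_apply, hne]).ge

lemma IsTotallyPos.diagonal_mul {N : ℕ} {d : Fin N → ℝ} (hd : ∀ i, 0 ≤ d i)
    {M : Matrix (Fin N) (Fin N) ℝ} (hM : IsTotallyPos M) :
    IsTotallyPos (diagonal d * M) := by
  intro k f g hf hg
  have hsub : (diagonal d * M).submatrix f g = diagonal (d ∘ f) * M.submatrix f g := by
    ext i j
    simp
  rw [hsub, det_mul, det_diagonal]
  exact mul_nonneg (prod_nonneg fun i _ => hd (f i)) (hM k f g hf hg)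

lemma IsTotallyPos.updateRow_add_smul {N : ℕ} {M : Matrix (Fin N) (Fin N) ℝ}
    (hM : IsTotallyPos M) {a b : Fin N} (hab : a ⋖ b) {c : ℝ} (hc : 0 ≤ c) :
    IsTotallyPos (M.updateRow a (M a + c • M b)) := by
  intro k f g hf hg
  by_cases ha : a ∈ Set.range f
  swap
  · rw [submatrix_updateRow_of_notMem_range M g ha]
    exact hM k f g hf hg
  obtain ⟨i, rfl⟩ := ha
  have hrow : (M.submatrix f g).updateRow i (M b ∘ g) =
      M.submatrix (Function.update f i b) g := by
    ext p q
    rcases eq_or_ne p i with rfl | hp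
    · simp
    · simp [updateRow_ne hp, Function.update_of_ne hp]
  have hb : 0 ≤ (M.submatrix (Function.update f i b) g).det := by
    by_cases hb : b ∈ Set.range f
    · obtain ⟨i', rfl⟩ := hb
      have hi' : i' ≠ i := fun h => hab.ne (congrArg f h).symm
      refine (det_zero_of_row_eq hi' ?_).ge
      ext q
      simp [Function.update_of_ne hi']
    · exact hM k _ g (hf.update_of_covBy hab hb) hg
  rw [submatrix_updateRow_of_injective M hf.injective, Pi.add_comp, det_updateRow_add,
    Pi.smul_comp, det_updateRow_smul, hrow, show M (f i) ∘ g = M.submatrix f g i from rfl,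
    updateRow_eq_self]
  exact add_nonneg (hM k f g hf hg) (mul_nonneg hc hb)

noncomputable def pascalPoly (x : ℝ) (j k : ℕ) : ℝ[X] := X ^ min k j * (X + C x) ^ (k - j)

lemma coeff_pascalPoly_eq_zero (x : ℝ) (j : ℕ) {k i : ℕ} (hki : k < i) :
    (pascalPoly x j k).coeff i = 0 := by
  refine coeff_eq_zero_of_natDegree_lt (lt_of_le_of_lt ?_ hki)
  unfold pascalPoly
  compute_degree
  omega

lemma coeff_pascalPoly (x : ℝ) (j k i : ℕ) :
    (pascalPoly x j k).coeff i = (pascalPoly x (j + 1) k).coeff i +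
      if j ≤ i then x * (pascalPoly x (j + 1) k).coeff (i + 1) else 0 := by
  rcases le_or_gt k j with hkj | hjk
  · have hik : j ≤ i → i + 1 ≠ k := by omega
    simp only [pascalPoly, min_eq_left hkj, min_eq_left (hkj.trans j.le_succ),
      Nat.sub_eq_zero_of_le hkj, Nat.sub_eq_zero_of_le (hkj.trans j.le_succ), pow_zero, mul_one,
      coeff_X_pow]
    split_ifs <;> simp_all
  · obtain ⟨m, rfl⟩ : ∃ m, k = j + 1 + m := ⟨k - (j + 1), by omega⟩
    have hsplit : pascalPoly x j (j + 1 + m) =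
        pascalPoly x (j + 1) (j + 1 + m) + C x * (X ^ j * (X + C x) ^ m) := by
      simp only [pascalPoly, min_eq_right (by omega : j ≤ j + 1 + m), min_eq_right (by omega :
        j + 1 ≤ j + 1 + m), show j + 1 + m - j = m + 1 by omega, Nat.add_sub_cancel_left]
      ring
    rw [hsplit, coeff_add, coeff_C_mul]
    simp only [pascalPoly, min_eq_right (by omega : j + 1 ≤ j + 1 + m), Nat.add_sub_cancel_left,
      coeff_X_pow_mul', Nat.add_sub_add_right, Nat.add_le_add_iff_right]
    by_cases hji : j ≤ i <;> simp [hji]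

/-- Column `k` holds the coefficients of `X ^ min k j * (X + x) ^ (k - j)`: the Pascal matrix
`C(k, i) x ^ (k - i)` at `j = 0`, the identity once `j ≥ n`. By Pascal's rule, stage `j` arises
from stage `j + 1` by adding `x` times row `a + 1` to row `a` for `a = j, …, n - 1`, top to
bottom. -/
noncomputable def pascalStage (n : ℕ) (x : ℝ) (j : ℕ) : Matrix (Fin (n + 1)) (Fin (n + 1)) ℝ :=
  of fun i k => (pascalPoly x j k).coeff i

lemma pascalStage_of_le {n j : ℕ} (x : ℝ) (hj : n ≤ j) : pascalStage n x j = 1 := by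
  ext i k
  have hkj : (k : ℕ) ≤ j := by omega
  simp [pascalStage, pascalPoly, min_eq_left hkj, Nat.sub_eq_zero_of_le hkj, coeff_X_pow,
    one_apply, Fin.ext_iff]

lemma IsTotallyPos.pascalStage_of_succ {n j : ℕ} {x : ℝ} (hx : 0 ≤ x)
    (h : IsTotallyPos (pascalStage n x (j + 1))) : IsTotallyPos (pascalStage n x j) := by
  -- rows above `a` are already those of stage `j`
  let S (a : ℕ) : Matrix (Fin (n + 1)) (Fin (n + 1)) ℝ :=
    of fun i k => (pascalPoly x (if (i : ℕ) < a then j else j + 1) k).coeff i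
  have hS : ∀ a ≤ n, IsTotallyPos (S a) := by
    intro a ha
    induction a with
    | zero => simpa [S, pascalStage] using h
    | succ a ih =>
      have hrow : S (a + 1) = (S a).updateRow ⟨a, by omega⟩
          (S a ⟨a, by omega⟩ + (if j ≤ a then x else 0) • S a ⟨a + 1, by omega⟩) := by
        ext i k
        rcases eq_or_ne i ⟨a, by omega⟩ with rfl | hi
        · by_cases hja : j ≤ a <;> simp [S, coeff_pascalPoly x j k a, hja]
        · have hia : (i : ℕ) < a + 1 ↔ (i : ℕ) < a := by
            have : (i : ℕ) ≠ a := fun h => hi (Fin.ext h)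
            omega
          simp [S, updateRow_ne hi, hia]
      rw [hrow]
      exact (ih (by omega)).updateRow_add_smul (Fin.covBy_iff.2 (Order.covBy_add_one a))
        (by split_ifs <;> simp [hx])
  convert hS n le_rfl using 1
  ext i k
  rcases (Nat.lt_succ_iff.1 i.isLt).lt_or_eq with hi | hi
  · simp [S, pascalStage, hi]
  · simp [S, pascalStage, hi, coeff_pascalPoly x j k n, coeff_pascalPoly_eq_zero x (j + 1) k.isLt]

lemma isTotallyPos_pascalStage (n : ℕ) {x : ℝ} (hx : 0 ≤ x) (j : ℕ) :
    IsTotallyPos (pascalStage n x j) := by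
  rcases le_total j n with hj | hj
  · refine Nat.decreasingInduction (fun j _ ih => ih.pascalStage_of_succ hx) ?_ hj
    rw [pascalStage_of_le x le_rfl]
    exact .one _
  · rw [pascalStage_of_le x hj]
    exact .one _

noncomputable def monomialWronskian (n : ℕ) (x : ℝ) : Matrix (Fin (n + 1)) (Fin (n + 1)) ℝ :=
  of fun i j => (Nat.descFactorial j i : ℝ) * x ^ ((j : ℕ) - i)

lemma monomialWronskian_eq_diagonal_mul_pascalStage (n : ℕ) (x : ℝ) :
    monomialWronskian n x =
      diagonal (fun i : Fin (n + 1) => ((i : ℕ).factorial : ℝ)) * pascalStage n x 0 := by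
  ext i k
  simp [monomialWronskian, pascalStage, pascalPoly, coeff_X_add_C_pow,
    Nat.descFactorial_eq_factorial_mul_choose]
  ring

lemma isTotallyPos_monomialWronskian (n : ℕ) {x : ℝ} (hx : 0 ≤ x) :
    IsTotallyPos (monomialWronskian n x) := by
  rw [monomialWronskian_eq_diagonal_mul_pascalStage]
  exact (isTotallyPos_pascalStage n hx 0).diagonal_mul fun i => by positivity

lemma Jmat_mul_monomialWronskian_mul_Jmat (n : ℕ) (x : ℝ) :
    Jmat n * monomialWronskian n x * Jmat n = monomialWronskian n (-x) := by
  ext i j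
  rcases le_or_gt (i : ℕ) j with hij | hij
  · have hsign : (-1 : ℝ) ^ (i : ℕ) * (-1) ^ (j : ℕ) = (-1) ^ ((j : ℕ) - i) := by
      obtain ⟨d, hd⟩ := Nat.exists_eq_add_of_le hij
      rw [hd, Nat.add_sub_cancel_left, ← pow_add, ← add_assoc, ← two_mul, pow_add, pow_mul]
      simp
    simp only [Jmat, monomialWronskian, diagonal_mul, mul_diagonal, of_apply]
    rw [neg_pow x, ← hsign]
    ring
  · simp [Jmat, monomialWronskian, Nat.descFactorial_eq_zero_iff_lt.2 hij]

theorem monomial_wronskian_totallyPos (n : ℕ) (x : ℝ) :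
    (0 ≤ x → IsTotallyPos
      (Matrix.of fun i j : Fin (n + 1) =>
        (Nat.descFactorial (j : ℕ) (i : ℕ) : ℝ) * x ^ ((j : ℕ) - (i : ℕ)))) ∧
    (x ≤ 0 → IsTotallyPos
      (Jmat n *
        (Matrix.of fun i j : Fin (n + 1) =>
          (Nat.descFactorial (j : ℕ) (i : ℕ) : ℝ) * x ^ ((j : ℕ) - (i : ℕ))) *
        Jmat n)) := by
  refine ⟨isTotallyPos_monomialWronskian n, fun hx => ?_⟩
  convert isTotallyPos_monomialWronskian n (neg_nonneg.2 hx) using 1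
  exact Jmat_mul_monomialWronskian_mul_Jmat n x
end
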